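/- For every vertex v of a finite simple graph G, the number of Naji solutions of G equals the number of Naji solutions of the local complement G^v: |B(G)| = |B(G^v)|. -/

import Mathlib

/-- A Naji solution of the simple graph `G`: an assignment of `GF(2)` values to ordered
pairs of distinct vertices (encoded as a function `V → V → ZMod 2` vanishing on the
diagonal) satisfying Naji's equations (a), (b), (c). -/
def NajiSolution {V : Type*} (G : SimpleGraph V) (β : V → V → ZMod 2) : Prop :=
  (∀ v, β v v = 0) ∧
  (∀ v w, G.Adj v w → β v w + β w v = 1) ∧
  (∀ v w x : V, v ≠ w → v ≠ x → w ≠ x →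
    G.Adj v w → ¬ G.Adj v x → ¬ G.Adj w x → β x v + β x w = 0) ∧
  (∀ v w x : V, v ≠ w → v ≠ x → w ≠ x →
    G.Adj v w → G.Adj v x → ¬ G.Adj w x →
    β v w + β v x + β w x + β x w = 1)

/-- The local complement of `G` at `v`: the adjacency of every pair of neighbours of `v`
is reversed, all other adjacencies are unchanged. -/
def localComp {V : Type*} (G : SimpleGraph V) (v : V) : SimpleGraph V where
  Adj x y := x ≠ y ∧ Xor' (G.Adj x y) (G.Adj v x ∧ G.Adj v y)
  symm := ⟨by
    rintro x y ⟨h1, h2⟩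
    refine ⟨h1.symm, ?_⟩
    rwa [G.adj_comm y x, and_comm]⟩
  loopless := ⟨fun _ h => h.1 rfl⟩

/-- Two graphs are locally equivalent if one is obtained from the other by a sequence of
local complementations. -/
def LocallyEquivalent {V : Type*} (G H : SimpleGraph V) : Prop :=
  Relation.ReflTransGen (fun A B => ∃ v : V, B = localComp A v) G H

/-! The bijection `B(G) ≃ B(G^v)` is `β ↦ β'` with `β'(x, y) = β(x, y) + β(v, y)` exactly when
`x, y, v` are distinct and `v ~ x` xor (`x ~ y` and `v ≁ y`), and `β' = β` elsewhere. This
condition reads the same in `G` and in `G^v` (the edge `xy` matters only when `v ≁ y`, and then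
local complementation does not touch it), so the map is an involution serving both directions.
Each Naji equation of `G^v` on a triple `p, q, r` is a GF(2)-linear consequence of the Naji
equations of `G` on `{v, p, q, r}`, a finite check. -/

section

variable {V : Type*} (G : SimpleGraph V) (v : V)

theorem localComp_adj {x y : V} :
    (localComp G v).Adj x y ↔ x ≠ y ∧ Xor (G.Adj x y) (G.Adj v x ∧ G.Adj v y) :=
  Iff.rfl

theorem localComp_localComp : localComp (localComp G v) v = G := by
  ext x y
  simp only [localComp_adj, xor_def]
  grind [SimpleGraph.adj_comm, SimpleGraph.ne_of_adj]

def NajiFlips (x y : V) : Prop :=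
  x ≠ v ∧ y ≠ v ∧ x ≠ y ∧ Xor (G.Adj v x) (G.Adj x y ∧ ¬ G.Adj v y)

theorem najiFlips_localComp : NajiFlips (localComp G v) v = NajiFlips G v := by
  funext x y
  simp only [NajiFlips, localComp_adj, SimpleGraph.irrefl, xor_def]
  grind

open Classical in
noncomputable def najiLocalComp (β : V → V → ZMod 2) : V → V → ZMod 2 := fun x y =>
  if NajiFlips G v x y then β x y + β v y else β x y

theorem najiLocalComp_localComp : najiLocalComp (localComp G v) v = najiLocalComp G v := by
  unfold najiLocalComp
  rw [najiFlips_localComp]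

theorem najiLocalComp_involutive : Function.Involutive (najiLocalComp G v) := by
  intro β
  funext x y
  have hv : ¬ NajiFlips G v v y := fun h => h.1 rfl
  by_cases h : NajiFlips G v x y <;>
    simp [najiLocalComp, h, hv, add_assoc, CharTwo.add_self_eq_zero]

variable {G v} in
theorem NajiSolution.localComp {β : V → V → ZMod 2} (hβ : NajiSolution G β) :
    NajiSolution (localComp G v) (najiLocalComp G v β) := by
  obtain ⟨h0, ha, hb, hc⟩ := hβ
  refine ⟨by simp [najiLocalComp, NajiFlips, h0], ?_, ?_, ?_⟩
  all_goals simp only [najiLocalComp, NajiFlips, localComp_adj, xor_def]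
  · grind [SimpleGraph.adj_comm]
  all_goals
    intro p q r
    by_cases p = v <;> by_cases q = v <;> by_cases r = v <;> grind [SimpleGraph.adj_comm]

noncomputable def najiSolutionsEquivLocalComp :
    {β // NajiSolution G β} ≃ {β // NajiSolution (localComp G v) β} where
  toFun β := ⟨najiLocalComp G v β, β.2.localComp⟩
  invFun β := ⟨najiLocalComp G v β, by
    simpa only [localComp_localComp, najiLocalComp_localComp] using β.2.localComp (v := v)⟩
  left_inv β := Subtype.ext (najiLocalComp_involutive G v β)
  right_inv β := Subtype.ext (najiLocalComp_involutive G v β)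

end

theorem card_najiSolutions_localComp_general {V : Type*} (G : SimpleGraph V) (v : V) :
    Nat.card {β : V → V → ZMod 2 // NajiSolution G β} =
      Nat.card {β : V → V → ZMod 2 // NajiSolution (localComp G v) β} :=
  Nat.card_congr (najiSolutionsEquivLocalComp G v)

/-- Local complementation preserves the number of Naji solutions. -/
theorem card_najiSolutions_localComp {V : Type*} [Fintype V] [DecidableEq V]
    (G : SimpleGraph V) (v : V) :
    Nat.card {β : V → V → ZMod 2 // NajiSolution G β} =
      Nat.card {β : V → V → ZMod 2 // NajiSolution (localComp G v) β} :=
  card_najiSolutions_localComp_general G v
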